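/- Let X be a nonempty subset of Zar(F) such that the ring A(X) = ⋂_{V∈X} V has quotient field F. Then J(X) = ⋂_{V∈X} 𝔪_V = 0 if and only if F itself belongs to the patch closure of X in Zar(F). -/

import Mathlib

open Set

/-- A subring `V` of a field `F` is a valuation ring of `F` (with quotient field `F`). -/
def IsValSubring (F : Type*) [Field F] (V : Subring F) : Prop :=
  ∀ t : F, t ≠ 0 → t ∈ V ∨ t⁻¹ ∈ V

/-- The Zariski-Riemann space of the field `F`: the set of valuation rings of `F`. -/
def Zar (F : Type*) [Field F] : Type _ := {V : Subring F // IsValSubring F V}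

/-- The patch (constructible) topology on `Zar F`, generated by the sets
`{V : x ∈ V}` and `{V : y ∉ V}` for `x, y ∈ F`. -/
instance Zar.patchTopology (F : Type*) [Field F] : TopologicalSpace (Zar F) :=
  TopologicalSpace.generateFrom
    ({S | ∃ x : F, S = {V : Zar F | x ∈ V.1}} ∪ {S | ∃ y : F, S = {V : Zar F | y ∉ V.1}})

variable {F : Type*} [Field F]

/-- The maximal ideal of a valuation ring of `F`, as a subset of `F`. -/
def mIdeal (V : Zar F) : Set F := {x : F | x ∈ V.1 ∧ (x = 0 ∨ x⁻¹ ∉ V.1)}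

/-- `A(X)`: the intersection of the valuation rings in `X`, as a subset of `F`. -/
def aSet (X : Set (Zar F)) : Set F := ⋂ V ∈ X, ((V : Zar F).1 : Set F)

/-- `A(X)` as a subring of `F`. -/
def ASub (X : Set (Zar F)) : Subring F := ⨅ V ∈ X, (V : Zar F).1

/-- `J(X)`: the intersection of the maximal ideals of the valuation rings in `X`. -/
def jSet (X : Set (Zar F)) : Set F := ⋂ V ∈ X, mIdeal V

/-- The set of limit points of `X` in the patch topology of `Zar F`. -/
def limPts (X : Set (Zar F)) : Set (Zar F) :=
  {V : Zar F | ∀ U : Set (Zar F), IsOpen U → V ∈ U → ∃ W ∈ X, W ≠ V ∧ W ∈ U}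


/-- The field `F` itself, as the trivial valuation ring in `Zar F`. -/
def trivV (F : Type*) [Field F] : Zar F := ⟨⊤, fun _ _ => Or.inl trivial⟩

/-- A subset `A` of `F` has quotient field `F` if every element of `F` is a quotient
of elements of `A`. -/
def HasQFSet (A : Set F) : Prop := ∀ x : F, ∃ a ∈ A, ∃ b ∈ A, b ≠ 0 ∧ x = a / b

/-!
A patch neighbourhood of `F` in `Zar F` can only be cut out by finitely many conditions
`x ∈ V`, so `F ∈ closure X` says that every finite subset of `F` lies in some `V ∈ X`.
If `J(X) = 0`, a nonzero common denominator `d ∈ A(X)` of such a finite set is a unit in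
some `V ∈ X`, and that `V` contains the set. Conversely, if `x ≠ 0` then `x⁻¹` lies in
some `V ∈ X`, so `x ∉ 𝔪_V`.
-/

namespace Zar

lemma isOpen_setOf_mem (x : F) : IsOpen {V : Zar F | x ∈ V.1} :=
  TopologicalSpace.isOpen_generateFrom_of_mem (Or.inl ⟨x, rfl⟩)

/-- The sets `{V | y ∉ V}` never contain `F`, so near `trivV F` only the generators
`{V | x ∈ V}` matter. -/
lemma exists_finset_subset_of_isOpen {U : Set (Zar F)} (hU : IsOpen U) (htriv : trivV F ∈ U) :
    ∃ S : Finset F, ∀ V : Zar F, (∀ x ∈ S, x ∈ V.1) → V ∈ U := by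
  classical
  induction hU with
  | basic s hs =>
    rcases hs with ⟨x, rfl⟩ | ⟨y, rfl⟩
    · exact ⟨{x}, fun V hV => hV x (Finset.mem_singleton_self x)⟩
    · exact absurd (Subring.mem_top y) htriv
  | univ => exact ⟨∅, fun _ _ => trivial⟩
  | inter s t _ _ ihs iht =>
    obtain ⟨S, hS⟩ := ihs htriv.1
    obtain ⟨T, hT⟩ := iht htriv.2
    exact ⟨S ∪ T, fun V hV => ⟨hS V fun x hx => hV x (Finset.mem_union_left _ hx),
      hT V fun x hx => hV x (Finset.mem_union_right _ hx)⟩⟩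
  | sUnion 𝒮 _ ih =>
    obtain ⟨t, ht𝒮, htrivt⟩ := htriv
    obtain ⟨S, hS⟩ := ih t ht𝒮 htrivt
    exact ⟨S, fun V hV => ⟨t, ht𝒮, hS V hV⟩⟩

end Zar

lemma mem_ASub {X : Set (Zar F)} {x : F} : x ∈ ASub X ↔ ∀ V ∈ X, x ∈ V.1 := by
  simp [ASub, Subring.mem_iInf]

lemma coe_ASub (X : Set (Zar F)) : (ASub X : Set F) = aSet X := by
  ext x
  simp [mem_ASub, aSet]

lemma zero_mem_jSet (X : Set (Zar F)) : (0 : F) ∈ jSet X := by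
  simp only [jSet, mem_iInter]
  exact fun V _ => ⟨V.1.zero_mem, Or.inl rfl⟩

lemma HasQFSet.exists_common_denom {A : Subring F} (hA : HasQFSet (A : Set F)) (S : Finset F) :
    ∃ d ∈ A, d ≠ 0 ∧ ∀ x ∈ S, d * x ∈ A := by
  classical
  induction S using Finset.induction_on with
  | empty => exact ⟨1, A.one_mem, one_ne_zero, by simp⟩
  | insert x S _ ih =>
    obtain ⟨d, hdA, hd0, hdS⟩ := ih
    obtain ⟨a, haA, b, hbA, hb0, rfl⟩ := hA x
    refine ⟨d * b, A.mul_mem hdA hbA, mul_ne_zero hd0 hb0, ?_⟩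
    simp only [Finset.mem_insert, forall_eq_or_imp]
    refine ⟨?_, fun y hy => ?_⟩
    · rw [mul_assoc, mul_div_cancel₀ a hb0]
      exact A.mul_mem hdA haA
    · rw [mul_right_comm]
      exact A.mul_mem (hdS y hy) hbA

lemma exists_mem_forall_mem_of_jSet_eq {X : Set (Zar F)} (hqf : HasQFSet (aSet X))
    (hj : jSet X = {0}) (S : Finset F) : ∃ V ∈ X, ∀ x ∈ S, x ∈ V.1 := by
  rw [← coe_ASub] at hqf
  obtain ⟨d, hdA, hd0, hdS⟩ := hqf.exists_common_denom S
  have hdJ : d ∉ jSet X := by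
    rw [hj]
    exact hd0
  simp only [jSet, mem_iInter, not_forall] at hdJ
  obtain ⟨V, hVX, hdV⟩ := hdJ
  have hdinv : d⁻¹ ∈ V.1 := by
    by_contra h
    exact hdV ⟨mem_ASub.1 hdA V hVX, Or.inr h⟩
  refine ⟨V, hVX, fun x hx => ?_⟩
  simpa [inv_mul_cancel_left₀ hd0] using V.1.mul_mem hdinv (mem_ASub.1 (hdS x hx) V hVX)

lemma trivV_mem_closure_of_jSet_eq {X : Set (Zar F)} (hqf : HasQFSet (aSet X))
    (hj : jSet X = {0}) : trivV F ∈ closure X := by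
  rw [mem_closure_iff]
  intro U hU htriv
  obtain ⟨S, hS⟩ := Zar.exists_finset_subset_of_isOpen hU htriv
  obtain ⟨V, hVX, hV⟩ := exists_mem_forall_mem_of_jSet_eq hqf hj S
  exact ⟨V, hS V hV, hVX⟩

lemma jSet_eq_of_trivV_mem_closure {X : Set (Zar F)} (hcl : trivV F ∈ closure X) :
    jSet X = {0} := by
  refine eq_singleton_iff_unique_mem.2 ⟨zero_mem_jSet X, fun x hx => ?_⟩
  by_contra hx0
  obtain ⟨W, hxW, hWX⟩ := mem_closure_iff.1 hcl _ (Zar.isOpen_setOf_mem x⁻¹)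
    (Subring.mem_top x⁻¹)
  simp only [jSet, mem_iInter] at hx
  exact (hx W hWX).2.elim hx0 (· hxW)

theorem stmt5_general (X : Set (Zar F)) (hqf : HasQFSet (aSet X)) :
    jSet X = {0} ↔ trivV F ∈ closure X :=
  ⟨trivV_mem_closure_of_jSet_eq hqf, jSet_eq_of_trivV_mem_closure⟩

theorem stmt5 (X : Set (Zar F)) (hX : X.Nonempty) (hqf : HasQFSet (aSet X)) :
    jSet X = {0} ↔ trivV F ∈ closure X :=
  stmt5_general X hqf
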